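/- The polar transform preserves total mutual information: I((P,Q)^-) + I((P,Q)^+) = I(P) + I(Q). -/
import Mathlib


open scoped Classical
noncomputable section

/-- Probability that the random variable `X` takes the value `a`, under the pmf `p`
on a finite sample space. -/
def pr {Ω α : Type*} [Fintype Ω] (p : Ω → ℝ) (X : Ω → α) (a : α) : ℝ :=
  ∑ ω, if X ω = a then p ω else 0

/-- Shannon entropy (in bits) of the random variable `X` under the pmf `p`. -/
def ent {Ω α : Type*} [Fintype Ω] [Fintype α] (p : Ω → ℝ) (X : Ω → α) : ℝ :=
  -∑ a, pr p X a * Real.logb 2 (pr p X a)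

/-- Mutual information `I(A; B)` (in bits). -/
def mi {Ω α β : Type*} [Fintype Ω] [Fintype α] [Fintype β]
    (p : Ω → ℝ) (A : Ω → α) (B : Ω → β) : ℝ :=
  ent p A + ent p B - ent p (fun ω => (A ω, B ω))

/-- Conditional mutual information `I(A; B | C)` (in bits). -/
def condMI {Ω α β γ : Type*} [Fintype Ω] [Fintype α] [Fintype β] [Fintype γ]
    (p : Ω → ℝ) (A : Ω → α) (B : Ω → β) (C : Ω → γ) : ℝ :=
  ent p (fun ω => (A ω, C ω)) + ent p (fun ω => (B ω, C ω))
    - ent p (fun ω => (A ω, B ω, C ω)) - ent p C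

/-- Symmetric capacity of a binary-input channel (uniform input). -/
def symCap {Y : Type*} [Fintype Y] (P : Bool → Y → ℝ) : ℝ :=
  ∑ x : Bool, ∑ y : Y, (1/2) * P x y *
    Real.logb 2 (P x y / ((1/2) * P false y + (1/2) * P true y))

set_option linter.unusedSectionVars false

section Aux

variable {Ω α β : Type*} [Fintype Ω] [Fintype α] [Fintype β]

lemma pr_nonneg {p : Ω → ℝ} (hp : ∀ ω, 0 ≤ p ω) (X : Ω → α) (a : α) : 0 ≤ pr p X a := by
  refine Finset.sum_nonneg fun ω _ => ?_
  split <;> simp [hp ω]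

lemma pr_marg_fst (p : Ω → ℝ) (A : Ω → α) (B : Ω → β) (a : α) :
    pr p A a = ∑ b, pr p (fun ω => (A ω, B ω)) (a, b) := by
  unfold pr
  rw [Finset.sum_comm]
  refine Finset.sum_congr rfl fun ω _ => ?_
  simp only [Prod.mk.injEq]
  by_cases h : A ω = a <;> simp [h]

lemma pr_marg_snd (p : Ω → ℝ) (A : Ω → α) (B : Ω → β) (b : β) :
    pr p B b = ∑ a, pr p (fun ω => (A ω, B ω)) (a, b) := by
  unfold pr
  rw [Finset.sum_comm]
  refine Finset.sum_congr rfl fun ω _ => ?_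
  simp only [Prod.mk.injEq]
  by_cases h : B ω = b <;> simp [h]

lemma pr_sum (p : Ω → ℝ) (X : Ω → α) : ∑ a, pr p X a = ∑ ω, p ω := by
  unfold pr
  rw [Finset.sum_comm]
  simp

lemma ent_congr {γ : Type*} [Fintype γ] (p : Ω → ℝ) (e : α ≃ γ) (f : Ω → γ) (g : Ω → α)
    (h : ∀ ω, f ω = e (g ω)) : ent p f = ent p g := by
  have hpr : ∀ a, pr p f (e a) = pr p g a := by
    intro a
    unfold pr
    refine Finset.sum_congr rfl fun ω _ => ?_
    rw [h ω]
    simp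
  unfold ent
  rw [← Equiv.sum_comp e (fun c => pr p f c * Real.logb 2 (pr p f c))]
  simp [hpr]

lemma xylogxy (x y : ℝ) :
    x * y * Real.logb 2 (x * y) = x * y * Real.logb 2 x + x * y * Real.logb 2 y := by
  by_cases hx : x = 0
  · simp [hx]
  by_cases hy : y = 0
  · simp [hy]
  rw [Real.logb_mul hx hy]; ring

lemma ent_pair_of_indep (p : Ω → ℝ) (A : Ω → α) (B : Ω → β)
    (hsum : ∑ ω, p ω = 1)
    (hind : ∀ a b, pr p (fun ω => (A ω, B ω)) (a, b) = pr p A a * pr p B b) :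
    ent p (fun ω => (A ω, B ω)) = ent p A + ent p B := by
  have hA : ∑ a, pr p A a = 1 := by rw [pr_sum, hsum]
  have hB : ∑ b, pr p B b = 1 := by rw [pr_sum, hsum]
  unfold ent
  rw [Fintype.sum_prod_type]
  simp_rw [hind, xylogxy, Finset.sum_add_distrib]
  have h1 : ∑ a, ∑ b, pr p A a * pr p B b * Real.logb 2 (pr p A a)
      = ∑ a, pr p A a * Real.logb 2 (pr p A a) := by
    refine Finset.sum_congr rfl fun a _ => ?_
    rw [← Finset.sum_mul]
    rw [show ∑ b, pr p A a * pr p B b = pr p A a * ∑ b, pr p B b from (Finset.mul_sum _ _ _).symm]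
    rw [hB]; ring
  have h2 : ∑ a, ∑ b, pr p A a * pr p B b * Real.logb 2 (pr p B b)
      = ∑ b, pr p B b * Real.logb 2 (pr p B b) := by
    rw [Finset.sum_comm]
    refine Finset.sum_congr rfl fun b _ => ?_
    have e : ∀ a : α, pr p A a * pr p B b * Real.logb 2 (pr p B b)
        = pr p A a * (pr p B b * Real.logb 2 (pr p B b)) := fun a => by ring
    simp_rw [e, ← Finset.sum_mul, hA, one_mul]
  rw [h1, h2]; ring

lemma mi_eq_kl (p : Ω → ℝ) (hp0 : ∀ ω, 0 ≤ p ω) (A : Ω → α) (B : Ω → β) :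
    ent p A + ent p B - ent p (fun ω => (A ω, B ω))
      = ∑ a, ∑ b, pr p (fun ω => (A ω, B ω)) (a, b) *
          Real.logb 2 (pr p (fun ω => (A ω, B ω)) (a, b) / (pr p A a * pr p B b)) := by
  have key : ∀ a b, pr p (fun ω => (A ω, B ω)) (a, b) *
          Real.logb 2 (pr p (fun ω => (A ω, B ω)) (a, b) / (pr p A a * pr p B b))
      = pr p (fun ω => (A ω, B ω)) (a, b) * Real.logb 2 (pr p (fun ω => (A ω, B ω)) (a, b))
        - pr p (fun ω => (A ω, B ω)) (a, b) * Real.logb 2 (pr p A a)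
        - pr p (fun ω => (A ω, B ω)) (a, b) * Real.logb 2 (pr p B b) := by
    intro a b
    set j := pr p (fun ω => (A ω, B ω)) (a, b) with hj
    by_cases h : j = 0
    · simp [h]
    have hjpos : 0 < j := lt_of_le_of_ne (pr_nonneg hp0 _ _) (Ne.symm h)
    have hja : j ≤ pr p A a := by
      rw [hj, pr_marg_fst p A B a]
      exact Finset.single_le_sum (fun b _ => pr_nonneg hp0 _ _) (Finset.mem_univ b)
    have hjb : j ≤ pr p B b := by
      rw [hj, pr_marg_snd p A B b]
      refine Finset.single_le_sum (f := fun a' => pr p (fun ω => (A ω, B ω)) (a', b))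
        (fun a' _ => pr_nonneg hp0 _ _) (Finset.mem_univ a)
    have ha : pr p A a ≠ 0 := ne_of_gt (lt_of_lt_of_le hjpos hja)
    have hb : pr p B b ≠ 0 := ne_of_gt (lt_of_lt_of_le hjpos hjb)
    rw [Real.logb_div h (mul_ne_zero ha hb), Real.logb_mul ha hb]
    ring
  simp_rw [key, Finset.sum_sub_distrib]
  have hA : ∑ a, ∑ b, pr p (fun ω => (A ω, B ω)) (a, b) * Real.logb 2 (pr p A a)
      = ∑ a, pr p A a * Real.logb 2 (pr p A a) := by
    refine Finset.sum_congr rfl fun a _ => ?_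
    rw [← Finset.sum_mul, ← pr_marg_fst]
  have hB : ∑ a, ∑ b, pr p (fun ω => (A ω, B ω)) (a, b) * Real.logb 2 (pr p B b)
      = ∑ b, pr p B b * Real.logb 2 (pr p B b) := by
    rw [Finset.sum_comm]
    refine Finset.sum_congr rfl fun b _ => ?_
    rw [← Finset.sum_mul, ← pr_marg_snd]
  rw [hA, hB]
  unfold ent
  rw [Fintype.sum_prod_type]
  ring

lemma ent_bool_uniform (p : Ω → ℝ) (X : Ω → Bool) (h : ∀ u, pr p X u = 1/2) :
    ent p X = 1 := by
  unfold ent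
  rw [Fintype.sum_bool, h, h]
  rw [show (1:ℝ)/2 = 2⁻¹ by norm_num, Real.logb_inv]
  have h2 : Real.logb 2 2 = 1 := Real.logb_self_eq_one one_lt_two
  rw [h2]; norm_num

end Aux

section AuxPolar

variable {Y₁ Y₂ : Type*} [Fintype Y₁] [Fintype Y₂]
  (P : Bool → Y₁ → ℝ) (Q : Bool → Y₂ → ℝ)
  (p : Bool × Bool × Y₁ × Y₂ → ℝ)

lemma expand_pr (hp : ∀ u₁ u₂ y₁ y₂, p (u₁, u₂, y₁, y₂)
      = (1/4) * (P (xor u₁ u₂) y₁ * Q u₂ y₂))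
    {α : Type*} (X : Bool × Bool × Y₁ × Y₂ → α) (a : α) :
    pr p X a = ∑ u₁ : Bool, ∑ u₂ : Bool, ∑ y₁, ∑ y₂,
        if X (u₁, u₂, y₁, y₂) = a then (1/4) * (P (xor u₁ u₂) y₁ * Q u₂ y₂) else 0 := by
  rw [pr, Fintype.sum_prod_type]
  refine Finset.sum_congr rfl fun u₁ _ => ?_
  rw [Fintype.sum_prod_type]
  refine Finset.sum_congr rfl fun u₂ _ => ?_
  rw [Fintype.sum_prod_type]
  refine Finset.sum_congr rfl fun y₁ _ => Finset.sum_congr rfl fun y₂ _ => ?_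
  rw [hp]

lemma sum_PQ (hP1 : ∀ x, ∑ y, P x y = 1) (hQ1 : ∀ x, ∑ y, Q x y = 1)
    (c : ℝ) (x z : Bool) : (∑ y₁, ∑ y₂, c * (P x y₁ * Q z y₂)) = c := by
  simp_rw [← mul_assoc]
  simp_rw [← Finset.mul_sum, hQ1, mul_one]
  simp_rw [← Finset.mul_sum, hP1, mul_one]

end AuxPolar

/-- The polar transform preserves total mutual information:
`I((P,Q)⁻) + I((P,Q)⁺) = I(P) + I(Q)`, where with `U₁, U₂` independent uniform bits,
`X₁ = U₁ ⊕ U₂`, `X₂ = U₂`, `Y₁ ~ P(·|X₁)`, `Y₂ ~ Q(·|X₂)`,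
`I((P,Q)⁻) = I(U₁; Y₁Y₂)` and `I((P,Q)⁺) = I(U₂; Y₁Y₂U₁)`. -/
theorem stmt1 {Y₁ Y₂ : Type*} [Fintype Y₁] [Fintype Y₂]
    (P : Bool → Y₁ → ℝ) (Q : Bool → Y₂ → ℝ)
    (hP0 : ∀ x y, 0 ≤ P x y) (hP1 : ∀ x, ∑ y, P x y = 1)
    (hQ0 : ∀ x y, 0 ≤ Q x y) (hQ1 : ∀ x, ∑ y, Q x y = 1)
    -- the joint pmf of `(U₁, U₂, Y₁, Y₂)`
    (p : Bool × Bool × Y₁ × Y₂ → ℝ)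
    (hp : ∀ u₁ u₂ y₁ y₂, p (u₁, u₂, y₁, y₂)
      = (1/4) * (P (xor u₁ u₂) y₁ * Q u₂ y₂)) :
    mi p (fun ω => ω.1) (fun ω => (ω.2.2.1, ω.2.2.2))
      + mi p (fun ω => ω.2.1) (fun ω => (ω.2.2.1, ω.2.2.2, ω.1))
      = symCap P + symCap Q := by
  have key := sum_PQ P Q hP1 hQ1
  have hp0 : ∀ ω, 0 ≤ p ω := by
    rintro ⟨u₁, u₂, y₁, y₂⟩
    rw [hp]
    have := hP0 (xor u₁ u₂) y₁
    have := hQ0 u₂ y₂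
    positivity
  have hpsum : ∑ ω, p ω = 1 := by
    have h := expand_pr P Q p hp (fun _ => true) true
    simp only [if_pos] at h
    rw [show pr p (fun _ => true) true = ∑ ω, p ω by unfold pr; simp] at h
    rw [h]
    simp only [Fintype.sum_bool]
    rw [key, key, key, key]
    norm_num
  -- marginals
  have prU1 : ∀ u, pr p (fun ω => ω.1) u = 1/2 := by
    intro u
    rw [expand_pr P Q p hp]
    cases u <;> simp [Fintype.sum_bool, key] <;> norm_num
  have prU2 : ∀ u, pr p (fun ω => ω.2.1) u = 1/2 := by
    intro u
    rw [expand_pr P Q p hp]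
    cases u <;> simp [Fintype.sum_bool, key] <;> norm_num
  -- the joint of ((X₁,Y₁),(X₂,Y₂))
  have prG : ∀ x₁ y₁ x₂ y₂, pr p (fun ω => ((xor ω.1 ω.2.1, ω.2.2.1), (ω.2.1, ω.2.2.2)))
      ((x₁, y₁), (x₂, y₂)) = (1/2 * P x₁ y₁) * (1/2 * Q x₂ y₂) := by
    intro x₁ y₁ x₂ y₂
    rw [expand_pr P Q p hp]
    cases x₁ <;> cases x₂ <;>
      simp [Fintype.sum_bool, Prod.mk.injEq, ite_and, Finset.sum_ite_eq', ← Finset.mul_sum, hQ1] <;>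
      ring
  have prX1Y1 : ∀ x y, pr p (fun ω => (xor ω.1 ω.2.1, ω.2.2.1)) (x, y) = 1/2 * P x y := by
    intro x y
    rw [pr_marg_fst p _ (fun ω => (ω.2.1, ω.2.2.2)) (x, y)]
    rw [Fintype.sum_prod_type]
    simp_rw [prG]
    rw [Fintype.sum_bool]
    simp_rw [← Finset.mul_sum, hQ1, mul_one]
    ring
  have prX2Y2 : ∀ x y, pr p (fun ω => (ω.2.1, ω.2.2.2)) (x, y) = 1/2 * Q x y := by
    intro x y
    rw [pr_marg_snd p (fun ω => (xor ω.1 ω.2.1, ω.2.2.1)) _ (x, y)]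
    rw [Fintype.sum_prod_type]
    simp_rw [prG]
    rw [Fintype.sum_bool]
    simp_rw [← Finset.sum_mul, ← Finset.mul_sum, hP1, mul_one]
    ring
  have prX1 : ∀ x, pr p (fun ω => xor ω.1 ω.2.1) x = 1/2 := by
    intro x
    rw [pr_marg_fst p _ (fun ω => ω.2.2.1) x]
    simp_rw [prX1Y1]
    rw [← Finset.mul_sum, hP1, mul_one]
  have prX2 : ∀ x, pr p (fun ω => ω.2.1) x = 1/2 := prU2
  have prY1 : ∀ y, pr p (fun ω => ω.2.2.1) y = 1/2 * P false y + 1/2 * P true y := by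
    intro y
    rw [pr_marg_snd p (fun ω => xor ω.1 ω.2.1) _ y, Fintype.sum_bool, prX1Y1, prX1Y1]
    ring
  have prY2 : ∀ y, pr p (fun ω => ω.2.2.2) y = 1/2 * Q false y + 1/2 * Q true y := by
    intro y
    rw [pr_marg_snd p (fun ω => ω.2.1) _ y, Fintype.sum_bool, prX2Y2, prX2Y2]
    ring
  have prYY : ∀ y₁ y₂, pr p (fun ω => (ω.2.2.1, ω.2.2.2)) (y₁, y₂)
      = (1/2 * P false y₁ + 1/2 * P true y₁) * (1/2 * Q false y₂ + 1/2 * Q true y₂) := by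
    intro y₁ y₂
    rw [expand_pr P Q p hp]
    simp [Fintype.sum_bool, Prod.mk.injEq, ite_and, Finset.sum_ite_eq']
    ring
  -- entropies of uniform bits
  have entU1 : ent p (fun ω => ω.1) = 1 := ent_bool_uniform p _ prU1
  have entU2 : ent p (fun ω => ω.2.1) = 1 := ent_bool_uniform p _ prU2
  have entX1 : ent p (fun ω => xor ω.1 ω.2.1) = 1 := ent_bool_uniform p _ prX1
  -- independence splits
  have entYY : ent p (fun ω => ((fun ω => ω.2.2.1) ω, (fun ω => ω.2.2.2) ω))
      = ent p (fun ω => ω.2.2.1) + ent p (fun ω => ω.2.2.2) := by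
    refine ent_pair_of_indep p _ _ hpsum ?_
    intro y₁ y₂
    rw [show (fun ω : Bool × Bool × Y₁ × Y₂ => ((fun ω : Bool × Bool × Y₁ × Y₂ => ω.2.2.1) ω,
      (fun ω : Bool × Bool × Y₁ × Y₂ => ω.2.2.2) ω)) = fun ω => (ω.2.2.1, ω.2.2.2) from rfl]
    rw [prYY, prY1, prY2]
  have entG : ent p (fun ω => ((fun ω => (xor ω.1 ω.2.1, ω.2.2.1)) ω, (fun ω => (ω.2.1, ω.2.2.2)) ω))
      = ent p (fun ω => (xor ω.1 ω.2.1, ω.2.2.1)) + ent p (fun ω => (ω.2.1, ω.2.2.2)) := by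
    refine ent_pair_of_indep p _ _ hpsum ?_
    rintro ⟨x₁, y₁⟩ ⟨x₂, y₂⟩
    rw [show (fun ω : Bool × Bool × Y₁ × Y₂ =>
      ((fun ω : Bool × Bool × Y₁ × Y₂ => (xor ω.1 ω.2.1, ω.2.2.1)) ω,
       (fun ω : Bool × Bool × Y₁ × Y₂ => (ω.2.1, ω.2.2.2)) ω))
      = fun ω : Bool × Bool × Y₁ × Y₂ => ((xor ω.1 ω.2.1, ω.2.2.1), (ω.2.1, ω.2.2.2)) from rfl]
    rw [prG, prX1Y1, prX2Y2]
  -- symCap as entropies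
  have symP : symCap P = ent p (fun ω => xor ω.1 ω.2.1) + ent p (fun ω => ω.2.2.1)
      - ent p (fun ω => (xor ω.1 ω.2.1, ω.2.2.1)) := by
    rw [mi_eq_kl p hp0 (fun ω => xor ω.1 ω.2.1) (fun ω => ω.2.2.1)]
    unfold symCap
    refine Finset.sum_congr rfl fun x _ => Finset.sum_congr rfl fun y _ => ?_
    rw [show (fun ω : Bool × Bool × Y₁ × Y₂ =>
      ((fun ω : Bool × Bool × Y₁ × Y₂ => xor ω.1 ω.2.1) ω,
       (fun ω : Bool × Bool × Y₁ × Y₂ => ω.2.2.1) ω))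
      = fun ω : Bool × Bool × Y₁ × Y₂ => (xor ω.1 ω.2.1, ω.2.2.1) from rfl]
    rw [prX1Y1, prX1, prY1]
    rw [show (1:ℝ)/2 * (1/2 * P false y + 1/2 * P true y)
      = (1/2) * ((1/2) * P false y + (1/2) * P true y) from by ring]
    rw [show (1:ℝ)/2 * P x y = (1/2) * (P x y) from rfl]
    rw [mul_div_mul_left (P x y) _ (by norm_num : (1:ℝ)/2 ≠ 0)]
  have symQ : symCap Q = ent p (fun ω => ω.2.1) + ent p (fun ω => ω.2.2.2)
      - ent p (fun ω => (ω.2.1, ω.2.2.2)) := by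
    rw [mi_eq_kl p hp0 (fun ω => ω.2.1) (fun ω => ω.2.2.2)]
    unfold symCap
    refine Finset.sum_congr rfl fun x _ => Finset.sum_congr rfl fun y _ => ?_
    rw [show (fun ω : Bool × Bool × Y₁ × Y₂ =>
      ((fun ω : Bool × Bool × Y₁ × Y₂ => ω.2.1) ω,
       (fun ω : Bool × Bool × Y₁ × Y₂ => ω.2.2.2) ω))
      = fun ω : Bool × Bool × Y₁ × Y₂ => (ω.2.1, ω.2.2.2) from rfl]
    rw [prX2Y2, prU2, prY2]
    rw [show (1:ℝ)/2 * (1/2 * Q false y + 1/2 * Q true y)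
      = (1/2) * ((1/2) * Q false y + (1/2) * Q true y) from by ring]
    rw [show (1:ℝ)/2 * Q x y = (1/2) * (Q x y) from rfl]
    rw [mul_div_mul_left (Q x y) _ (by norm_num : (1:ℝ)/2 ≠ 0)]
  -- relabelings
  have eB2 : ent p (fun ω => (ω.2.2.1, ω.2.2.2, ω.1))
      = ent p (fun ω => (ω.1, ω.2.2.1, ω.2.2.2)) := by
    refine ent_congr p ⟨fun a => (a.2.1, a.2.2, a.1), fun b => (b.2.2, b.1, b.2.1),
      by rintro ⟨a, b, c⟩; rfl, by rintro ⟨a, b, c⟩; rfl⟩ _ _ ?_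
    rintro ⟨u₁, u₂, y₁, y₂⟩; rfl
  have eG : ent p (fun ω => ((fun ω => ω.2.1) ω, (fun ω => (ω.2.2.1, ω.2.2.2, ω.1)) ω))
      = ent p (fun ω => ((fun ω => (xor ω.1 ω.2.1, ω.2.2.1)) ω, (fun ω => (ω.2.1, ω.2.2.2)) ω)) := by
    refine ent_congr p
      ⟨fun g => (g.2.1, (g.1.2, g.2.2, xor g.1.1 g.2.1)),
       fun b => ((xor b.2.2.2 b.1, b.2.1), (b.1, b.2.2.1)),
       by rintro ⟨⟨x₁, y₁⟩, ⟨x₂, y₂⟩⟩; simp [Bool.xor_assoc],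
       by rintro ⟨u, y₁, y₂, w⟩; simp [Bool.xor_assoc]⟩ _ _ ?_
    rintro ⟨u₁, u₂, y₁, y₂⟩
    simp [Bool.xor_assoc]
  -- put it together
  simp only [mi]
  rw [eG, entG, eB2]
  rw [show (fun ω : Bool × Bool × Y₁ × Y₂ =>
      ((fun ω : Bool × Bool × Y₁ × Y₂ => ω.1) ω,
       (fun ω : Bool × Bool × Y₁ × Y₂ => (ω.2.2.1, ω.2.2.2)) ω))
      = fun ω : Bool × Bool × Y₁ × Y₂ => (ω.1, ω.2.2.1, ω.2.2.2) from rfl]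
  rw [entYY, symP, symQ, entU1, entU2, entX1]
  ring
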